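/- Let 0 < k < 1 and δ ∈ {1,-1}. Then u(t,x) = c1 + c2·e^{-x} + (1 - e^{-x}/k)·t + (δ/k)·[2(k + e^{-x}/2)·arctan√((e^{-x} - k)/k) - 3√(k(e^{-x} - k))] satisfies the PDE u_t + (u_x + u_xx)^2 = 0 for all t and all x < -log k. -/

import Mathlib

/-! Substituting `w = exp (-x)` turns `∂ₓ + ∂ₓ²` into `w² ∂_w²`. This annihilates the part
`c1 + c2 w + (1 - w / k) t` of `u`, which is affine in `w`, while the remaining part
`(δ / k) Φ(w)` has `Φ'' = k g / w²` with `g = √((w - k) / k)`. Hence `u_x + u_xx = δ g`, whose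
square `(w - k) / k` is exactly `-u_t = w / k - 1`. -/

open Real Filter Topology

theorem hasDerivAt_exp_neg (y : ℝ) : HasDerivAt (fun z => exp (-z)) (-exp (-y)) y := by
  simpa using (hasDerivAt_neg y).exp

theorem deriv_add_deriv_deriv_comp_exp_neg {Ψ Ψ' : ℝ → ℝ} {Ψ'' x : ℝ}
    (hΨ : ∀ᶠ w in 𝓝 (exp (-x)), HasDerivAt Ψ (Ψ' w) w) (hΨ' : HasDerivAt Ψ' Ψ'' (exp (-x))) :
    deriv (fun y => Ψ (exp (-y))) x + deriv (fun y => deriv (fun z => Ψ (exp (-z))) y) x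
      = exp (-x) ^ 2 * Ψ'' := by
  have hnear : ∀ᶠ y in 𝓝 x, HasDerivAt Ψ (Ψ' (exp (-y))) (exp (-y)) :=
    (continuous_exp.comp continuous_neg).continuousAt.eventually hΨ
  have hd1 : (fun y => deriv (fun z => Ψ (exp (-z))) y) =ᶠ[𝓝 x]
      fun y => Ψ' (exp (-y)) * -exp (-y) :=
    hnear.mono fun y h => (h.comp y (hasDerivAt_exp_neg y)).deriv
  have hd2 : HasDerivAt (fun y => Ψ' (exp (-y)) * -exp (-y))
      (Ψ'' * -exp (-x) * -exp (-x) + Ψ' (exp (-x)) * - -exp (-x)) x :=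
    (hΨ'.comp x (hasDerivAt_exp_neg x)).mul (hasDerivAt_exp_neg x).neg
  rw [hd1.eq_of_nhds, hd1.deriv_eq, hd2.deriv]
  ring

theorem sqrt_mul_eq_mul_sqrt_div {k : ℝ} (hk : 0 < k) (a : ℝ) : √(k * a) = k * √(a / k) := by
  rw [show k * a = k ^ 2 * (a / k) by field_simp, Real.sqrt_mul (by positivity),
    Real.sqrt_sq hk.le]

section SqrtSubDiv

variable {k w : ℝ}

theorem mul_sqrt_sub_div_sq (hk : 0 < k) (hw : k ≤ w) : k * √((w - k) / k) ^ 2 = w - k := by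
  rw [Real.sq_sqrt (div_nonneg (sub_nonneg.mpr hw) hk.le)]
  field_simp

theorem one_add_sqrt_sub_div_sq (hk : 0 < k) (hw : k ≤ w) : 1 + √((w - k) / k) ^ 2 = w / k := by
  rw [eq_div_iff hk.ne']
  linear_combination mul_sqrt_sub_div_sq hk hw

theorem hasDerivAt_sqrt_sub_div (hk : 0 < k) (hw : k < w) :
    HasDerivAt (fun v => √((v - k) / k)) (1 / (2 * k * √((w - k) / k))) w := by
  have hq : (w - k) / k ≠ 0 := (div_pos (sub_pos.mpr hw) hk).ne'
  refine ((((hasDerivAt_id' w).sub_const k).div_const k).sqrt hq).congr_deriv ?_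
  field_simp

end SqrtSubDiv

noncomputable def profile (k w : ℝ) : ℝ :=
  2 * (k + w / 2) * arctan (√((w - k) / k)) - 3 * √(k * (w - k))

section Profile

variable {k w : ℝ}

theorem hasDerivAt_profile (hk : 0 < k) (hw : k < w) :
    HasDerivAt (profile k) (arctan (√((w - k) / k)) - k * √((w - k) / k) / w) w := by
  have hG := hasDerivAt_sqrt_sub_div hk hw
  have hprofile : profile k =
      fun v => (2 * k + v) * arctan (√((v - k) / k)) - 3 * k * √((v - k) / k) := by
    funext v
    rw [profile, sqrt_mul_eq_mul_sqrt_div hk]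
    ring
  rw [hprofile]
  refine ((((hasDerivAt_id' w).const_add (2 * k)).mul hG.arctan).sub
    (hG.const_mul (3 * k))).congr_deriv ?_
  have hg : 0 < √((w - k) / k) := Real.sqrt_pos.mpr (div_pos (sub_pos.mpr hw) hk)
  have hg2 := mul_sqrt_sub_div_sq hk hw.le
  have hw0 : w ≠ 0 := by linarith
  rw [one_add_sqrt_sub_div_sq hk hw.le]
  field_simp
  linear_combination 2 * hg2

theorem hasDerivAt_deriv_profile (hk : 0 < k) (hw : k < w) :
    HasDerivAt (fun v => arctan (√((v - k) / k)) - k * √((v - k) / k) / v)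
      (k * √((w - k) / k) / w ^ 2) w := by
  have hG := hasDerivAt_sqrt_sub_div hk hw
  refine (hG.arctan.sub ((hG.const_mul k).div (hasDerivAt_id' w) (by linarith))).congr_deriv ?_
  have hg : 0 < √((w - k) / k) := Real.sqrt_pos.mpr (div_pos (sub_pos.mpr hw) hk)
  rw [one_add_sqrt_sub_div_sq hk hw.le]
  field_simp
  ring

end Profile

theorem stmt8_general (k δ c1 c2 : ℝ)
    (hk : 0 < k)
    (hδ : δ = 1 ∨ δ = -1)
    (u : ℝ → ℝ → ℝ)
    (hu : ∀ t x : ℝ, u t x = c1 + c2 * Real.exp (-x) + (1 - Real.exp (-x) / k) * t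
      + (δ / k) * (2 * (k + Real.exp (-x) / 2) * Real.arctan (Real.sqrt ((Real.exp (-x) - k) / k))
        - 3 * Real.sqrt (k * (Real.exp (-x) - k)))) :
    ∀ t x : ℝ, x < -Real.log k →
      deriv (fun s => u s x) t
      + (deriv (fun y => u t y) x
         + deriv (fun y => deriv (fun z => u t z) y) x) ^ 2 = 0 := by
  intro t x hx
  have hw : k < exp (-x) := by
    rw [← exp_log hk]
    exact exp_lt_exp.mpr (by linarith)
  have hut : deriv (fun s => u s x) t = 1 - exp (-x) / k := by
    simp_rw [hu]
    exact ((((hasDerivAt_id' t).const_mul _).const_add _).add_const _).deriv.trans (by ring)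
  set Ψ : ℝ → ℝ := fun w => c1 + c2 * w + (1 - w / k) * t + δ / k * profile k w
  have hux : (fun y => u t y) = fun y => Ψ (exp (-y)) := funext (hu t)
  have hΨ : ∀ᶠ w in 𝓝 (exp (-x)),
      HasDerivAt Ψ (c2 - t / k + δ / k * (arctan (√((w - k) / k)) - k * √((w - k) / k) / w)) w := by
    filter_upwards [Ioi_mem_nhds hw] with w hkw
    exact (((((hasDerivAt_id' w).const_mul c2).const_add c1).add
      ((((hasDerivAt_id' w).div_const k).const_sub 1).mul_const t)).add
      ((hasDerivAt_profile hk hkw).const_mul (δ / k))).congr_deriv (by ring)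
  rw [hut, hux, deriv_add_deriv_deriv_comp_exp_neg hΨ
    (((hasDerivAt_deriv_profile hk hw).const_mul (δ / k)).const_add (c2 - t / k))]
  have hg2 := mul_sqrt_sub_div_sq hk hw.le
  have hδ2 : δ ^ 2 = 1 := by rcases hδ with rfl | rfl <;> norm_num
  have hw0 : exp (-x) ≠ 0 := (exp_pos _).ne'
  field_simp
  linear_combination (k * √((exp (-x) - k) / k) ^ 2) * hδ2 + hg2

theorem stmt8 (k δ c1 c2 : ℝ)
    (hk : 0 < k)
    (hk1 : k < 1)
    (hδ : δ = 1 ∨ δ = -1)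
    (u : ℝ → ℝ → ℝ)
    (hu : ∀ t x : ℝ, u t x = c1 + c2 * Real.exp (-x) + (1 - Real.exp (-x) / k) * t
      + (δ / k) * (2 * (k + Real.exp (-x) / 2) * Real.arctan (Real.sqrt ((Real.exp (-x) - k) / k))
        - 3 * Real.sqrt (k * (Real.exp (-x) - k)))) :
    ∀ t x : ℝ, x < -Real.log k →
      deriv (fun s => u s x) t
      + (deriv (fun y => u t y) x
         + deriv (fun y => deriv (fun z => u t z) y) x) ^ 2 = 0 :=
  stmt8_general k δ c1 c2 hk hδ u hu
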